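/- For any rooted ordered tree T with n ≥ 1 nodes, the tree entropy satisfies n·H(T) ≤ 2n, where n·H(T) = -∑_{i≥0} d_i log₂(d_i/n) and d_i is the number of nodes of degree i in T. -/

import Mathlib

/-!
With `q i = 2^{-(i+1)}`, which sums to at most `1`, Gibbs' inequality bounds the entropy
`∑ d i · log₂ (n / d i)` by the cross entropy `∑ d i · log₂ (1 / q i) = ∑ (i + 1) · d i`,
and the degree sum gives `∑ (i + 1) · d i ≤ (n - 1) + n ≤ 2n`.
-/

open Finset Real

lemma mul_log_div_le_sub {a c : ℝ} (ha : 0 ≤ a) (hc : 0 < c) : a * log (c / a) ≤ c - a := by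
  rcases ha.eq_or_lt with rfl | ha
  · simpa using hc.le
  · have h := log_le_sub_one_of_pos (div_pos hc ha)
    calc a * log (c / a) ≤ a * (c / a - 1) := mul_le_mul_of_nonneg_left h ha.le
      _ = c - a := by field_simp

lemma sum_mul_log_div_le_sum_mul_log_inv {ι : Type*} (s : Finset ι) {a q : ι → ℝ}
    (ha : ∀ i ∈ s, 0 ≤ a i) (hq : ∀ i ∈ s, 0 < q i) (hq_sum : ∑ i ∈ s, q i ≤ 1) :
    ∑ i ∈ s, a i * log ((∑ j ∈ s, a j) / a i) ≤ ∑ i ∈ s, a i * log (q i)⁻¹ := by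
  set N := ∑ j ∈ s, a j
  have hN : 0 ≤ N := sum_nonneg ha
  have term : ∀ i ∈ s, a i * log (N / a i) ≤ (N * q i - a i) + a i * log (q i)⁻¹ := by
    intro i hi
    rcases (ha i hi).eq_or_lt with h0 | hpos
    · rw [← h0]
      simpa using mul_nonneg hN (hq i hi).le
    · have hNpos : 0 < N := hpos.trans_le (single_le_sum ha hi)
      have hsplit : N / a i = (N * q i / a i) * (q i)⁻¹ := by
        field_simp [(hq i hi).ne']
      rw [hsplit, log_mul (div_pos (mul_pos hNpos (hq i hi)) hpos).ne' (inv_pos.2 (hq i hi)).ne',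
        mul_add]
      gcongr
      simpa [mul_div_assoc] using mul_log_div_le_sub (ha i hi) (mul_pos hNpos (hq i hi))
  calc ∑ i ∈ s, a i * log (N / a i)
      ≤ ∑ i ∈ s, ((N * q i - a i) + a i * log (q i)⁻¹) := sum_le_sum term
    _ = N * (∑ i ∈ s, q i - 1) + ∑ i ∈ s, a i * log (q i)⁻¹ := by
        rw [sum_add_distrib, sum_sub_distrib, ← mul_sum]; ring
    _ ≤ ∑ i ∈ s, a i * log (q i)⁻¹ := by
        nlinarith [mul_nonpos_of_nonneg_of_nonpos hN (sub_nonpos.2 hq_sum)]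

lemma sum_range_half_pow_succ_le_one (m : ℕ) : ∑ i ∈ range m, (1 / 2 : ℝ) ^ (i + 1) ≤ 1 := by
  simp only [pow_succ, ← sum_mul]
  linarith [sum_geometric_two_le m]

lemma neg_mul_logb_div_eq {x n : ℝ} : -(x * logb 2 (x / n)) = x * log (n / x) / log 2 := by
  rw [logb, ← neg_neg (log (n / x)), ← log_inv, inv_div]; ring

lemma sum_succ_mul_le_two_mul {n : ℕ} {d : ℕ → ℕ}
    (hsum : ∑ i ∈ range (n + 1), d i = n) (hedges : ∑ i ∈ range (n + 1), i * d i = n - 1) :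
    ∑ i ∈ range (n + 1), ((i : ℝ) + 1) * d i ≤ 2 * n := by
  have h : ∑ i ∈ range (n + 1), (i + 1) * d i ≤ 2 * n := by
    simp only [add_mul, one_mul, sum_add_distrib, hsum, hedges]
    omega
  exact_mod_cast h

theorem stmt6_general (n : ℕ) (d : ℕ → ℕ)
    (hsum : ∑ i ∈ Finset.range (n + 1), d i = n)
    (hedges : ∑ i ∈ Finset.range (n + 1), i * d i = n - 1) :
    -∑ i ∈ Finset.range (n + 1), (d i : ℝ) * Real.logb 2 ((d i : ℝ) / (n : ℝ)) ≤
      2 * (n : ℝ) := by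
  have hq_pos : ∀ i ∈ range (n + 1), (0 : ℝ) < (1 / 2) ^ (i + 1) := fun _ _ => by positivity
  have hgibbs := sum_mul_log_div_le_sum_mul_log_inv (range (n + 1)) (a := fun i => (d i : ℝ))
    (fun _ _ => Nat.cast_nonneg _) hq_pos (sum_range_half_pow_succ_le_one _)
  have hcross : ∀ i : ℕ,
      (d i : ℝ) * log ((1 / 2 : ℝ) ^ (i + 1))⁻¹ = ((i : ℝ) + 1) * d i * log 2 := by
    intro i
    rw [one_div, inv_pow, inv_inv, log_pow]; push_cast; ring
  simp only [hcross, ← sum_mul] at hgibbs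
  rw [← Nat.cast_sum, hsum] at hgibbs
  calc -∑ i ∈ range (n + 1), (d i : ℝ) * logb 2 ((d i : ℝ) / n)
      = (∑ i ∈ range (n + 1), (d i : ℝ) * log (n / d i)) / log 2 := by
        rw [← sum_neg_distrib, sum_div]; simp only [neg_mul_logb_div_eq]
    _ ≤ ∑ i ∈ range (n + 1), ((i : ℝ) + 1) * d i := by
        rw [div_le_iff₀ (log_pos one_lt_two)]; exact hgibbs
    _ ≤ 2 * n := sum_succ_mul_le_two_mul hsum hedges

/-- Tree entropy is at most `2n`: if `d i` counts nodes of degree `i` in a rooted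
ordered tree with `n ≥ 1` nodes (so `∑ d i = n` and `∑ i·d i = n - 1`), then
`-∑ i, d i · log₂ (d i / n) ≤ 2n`. -/
theorem stmt6 (n : ℕ) (hn : 1 ≤ n) (d : ℕ → ℕ)
    (hsum : ∑ i ∈ Finset.range (n + 1), d i = n)
    (hedges : ∑ i ∈ Finset.range (n + 1), i * d i = n - 1) :
    -∑ i ∈ Finset.range (n + 1), (d i : ℝ) * Real.logb 2 ((d i : ℝ) / (n : ℝ)) ≤
      2 * (n : ℝ) :=
  stmt6_general n d hsum hedges
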